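/- Let p ≥ 1 be an integer and λ ∈ [0,1]. Consider the set S ⊆ (({1,…,p} × {1,2,…} → ℂ) × ({1,…,p} × {1,2,…} → ℂ)) of coefficient pairs (a,b) satisfying a_{1,1} = 1, b_{1,1} = 0, a_{1,k} = b_{1,k} = 0 for 2 ≤ k ≤ p, and Σ_{k=1}^p Σ_{n=2}^∞ (2(k−1) + n(λn + 1 − λ))(|a_{n,k}| + |b_{n,k}|) ≤ 1 (the coefficient set of the class HS_p^0(λ)), as a convex subset of the affine subspace {a_{1,1} = 1} of the product vector space. Then every extreme point (a,b) of S has exactly one nonzero coefficient besides a_{1,1}: either a single a_{n,k} ≠ 0 with n ≥ 2, 1 ≤ k ≤ p and |a_{n,k}| = 1/(2(k−1) + n(λn + 1 − λ)), or a single b_{m,k} ≠ 0 with m ≥ 2, 1 ≤ k ≤ p and |b_{m,k}| = 1/(2(k−1) + m(λm + 1 − λ)). -/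

import Mathlib

/-!
An extreme point `x` must saturate the constraint: otherwise `a_{2,1}` can be moved by `±ε`
within the set. If two free coefficients `c`, `d` (those with `n ≥ 2`, `1 ≤ k ≤ p`) were nonzero,
scaling them to `(1 + t) c, (1 - u) d` or `(1 - t) c, (1 + u) d` with `t w ‖c‖ = u w' ‖d‖` keeps the
weighted sum unchanged, so `x` would be a midpoint of two distinct points. Hence exactly one free
coefficient is nonzero and its weighted modulus is `1`.
-/

open Complex Metric Set

/-- The coefficient set of the class `HS_p^0(λ)`: pairs `(a, b)` of coefficient arrays
(`x.1 n k = a_{n,k}`, `x.2 n k = b_{n,k}`, supported on `1 ≤ n`, `1 ≤ k ≤ p`) with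
`a_{1,1} = 1`, `b_{1,1} = 0`, `a_{1,k} = b_{1,k} = 0` for `2 ≤ k ≤ p` and
`Σ_{k=1}^p Σ_{n=2}^∞ (2(k−1) + n(λn+1−λ))(|a_{n,k}| + |b_{n,k}|) ≤ 1`. -/
def ES (p : ℕ) (lam : ℝ) : Set ((ℕ → ℕ → ℂ) × (ℕ → ℕ → ℂ)) :=
  {x | x.1 1 1 = 1 ∧ x.2 1 1 = 0 ∧
    (∀ k, 2 ≤ k → k ≤ p → x.1 1 k = 0 ∧ x.2 1 k = 0) ∧
    (∀ n k, n = 0 ∨ k = 0 ∨ p < k → x.1 n k = 0 ∧ x.2 n k = 0) ∧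
    (∀ k ∈ Finset.Icc 1 p, Summable (fun n : ℕ =>
      if 2 ≤ n then (2 * ((k : ℝ) - 1) + n * (lam * n + 1 - lam)) *
        (‖x.1 n k‖ + ‖x.2 n k‖) else 0)) ∧
    ∑ k ∈ Finset.Icc 1 p, ∑' n : ℕ,
      (if 2 ≤ n then (2 * ((k : ℝ) - 1) + n * (lam * n + 1 - lam)) *
        (‖x.1 n k‖ + ‖x.2 n k‖) else 0) ≤ 1}

theorem eq_zero_of_add_mem_of_sub_mem {E : Type*} [AddCommGroup E] [Module ℝ E] {A : Set E}
    {x v : E} (hx : x ∈ A.extremePoints ℝ) (hadd : x + v ∈ A) (hsub : x - v ∈ A) : v = 0 := by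
  have hmid : x ∈ openSegment ℝ (x + v) (x - v) := by
    simpa only [midpoint_add_sub] using midpoint_mem_openSegment (𝕜 := ℝ) (x + v) (x - v)
  exact add_eq_left.1 (hx.2 hadd hsub hmid)

theorem norm_add_ofReal_mul_self_sub_norm (c : ℂ) {t : ℝ} (ht : -1 ≤ t) :
    ‖c + t * c‖ - ‖c‖ = t * ‖c‖ := by
  rw [show c + t * c = ((1 + t : ℝ) : ℂ) * c by push_cast; ring, norm_mul, norm_real,
    Real.norm_of_nonneg (by linarith)]
  ring

namespace ES

abbrev Coeffs := (ℕ → ℕ → ℂ) × (ℕ → ℕ → ℂ)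

def coeff (s : Bool) (x : Coeffs) : ℕ → ℕ → ℂ := cond s x.1 x.2

def single (s : Bool) (n k : ℕ) (c : ℂ) : Coeffs :=
  cond s (Pi.single n (Pi.single k c), 0) (0, Pi.single n (Pi.single k c))

def IsFree (p n k : ℕ) : Prop := 2 ≤ n ∧ 1 ≤ k ∧ k ≤ p

def weight (lam : ℝ) (n k : ℕ) : ℝ := 2 * ((k : ℝ) - 1) + n * (lam * n + 1 - lam)

noncomputable def term (lam : ℝ) (x : Coeffs) (k n : ℕ) : ℝ :=
  if 2 ≤ n then weight lam n k * (‖x.1 n k‖ + ‖x.2 n k‖) else 0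

noncomputable def weightedNorm (p : ℕ) (lam : ℝ) (x : Coeffs) : ℝ :=
  ∑ k ∈ Finset.Icc 1 p, ∑' n, term lam x k n

structure Admissible (p : ℕ) (lam : ℝ) (x : Coeffs) : Prop where
  fst_one_one : x.1 1 1 = 1
  snd_one_one : x.2 1 1 = 0
  zero_at_one : ∀ k, 2 ≤ k → k ≤ p → x.1 1 k = 0 ∧ x.2 1 k = 0
  zero_off_range : ∀ n k, n = 0 ∨ k = 0 ∨ p < k → x.1 n k = 0 ∧ x.2 n k = 0
  summable : ∀ k ∈ Finset.Icc 1 p, Summable (term lam x k)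

variable {p : ℕ} {lam : ℝ} {x : Coeffs} {s s' : Bool} {n k m j : ℕ}

theorem mem_iff : x ∈ ES p lam ↔ Admissible p lam x ∧ weightedNorm p lam x ≤ 1 :=
  ⟨fun ⟨h₁, h₂, h₃, h₄, h₅, h₆⟩ => ⟨⟨h₁, h₂, h₃, h₄, h₅⟩, h₆⟩,
    fun ⟨⟨h₁, h₂, h₃, h₄, h₅⟩, h₆⟩ => ⟨h₁, h₂, h₃, h₄, h₅, h₆⟩⟩

theorem IsFree.weight_pos (hlam : 0 ≤ lam) (h : IsFree p n k) : 0 < weight lam n k := by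
  have hn : (2 : ℝ) ≤ n := by exact_mod_cast h.1
  have hk : (1 : ℝ) ≤ k := by exact_mod_cast h.2.1
  have : 0 ≤ lam * ((n : ℝ) - 1) := mul_nonneg hlam (by linarith)
  unfold weight
  nlinarith

theorem coeff_zero : coeff s 0 = 0 := by
  cases s <;> rfl

theorem coeff_add (y : Coeffs) : coeff s (x + y) = coeff s x + coeff s y := by
  cases s <;> rfl

theorem coeff_single_self (c : ℂ) : coeff s (single s n k c) n k = c := by
  cases s <;> simp [coeff, single]

theorem coeff_single_of_ne (c : ℂ) (h : (s', m, j) ≠ (s, n, k)) :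
    coeff s' (single s n k c) m j = 0 := by
  cases s <;> cases s' <;> by_cases hm : m = n <;> simp_all [coeff, single]

theorem single_neg (c : ℂ) : single s n k (-c) = -single s n k c := by
  cases s <;> simp [single, Pi.single_neg]

theorem single_eq_zero_iff {c : ℂ} : single s n k c = 0 ↔ c = 0 :=
  ⟨fun h => by
    simpa only [coeff_single_self, coeff_zero, Pi.zero_apply] using congrArg (coeff s · n k) h,
    fun h => by cases s <;> simp [single, h]⟩

theorem Admissible.coeff_eq_zero (hx : Admissible p lam x) (h : ¬IsFree p n k)
    (h11 : (s, n, k) ≠ (true, 1, 1)) : coeff s x n k = 0 := by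
  unfold IsFree at h
  by_cases hout : n = 0 ∨ k = 0 ∨ p < k
  · cases s
    exacts [(hx.zero_off_range n k hout).2, (hx.zero_off_range n k hout).1]
  obtain rfl : n = 1 := by omega
  rcases (by omega : k = 1 ∨ 2 ≤ k) with rfl | hk
  · cases s
    exacts [hx.snd_one_one, absurd rfl h11]
  · cases s
    exacts [(hx.zero_at_one k hk (by omega)).2, (hx.zero_at_one k hk (by omega)).1]

theorem coeff_add_single_of_ne (c : ℂ) (h : (s', m, j) ≠ (s, n, k)) :
    coeff s' (x + single s n k c) m j = coeff s' x m j := by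
  rw [coeff_add, Pi.add_apply, Pi.add_apply, coeff_single_of_ne c h, add_zero]

theorem term_add_single (hn : 2 ≤ n) (a : ℂ) (i : ℕ) :
    term lam (x + single s n k a) i = term lam x i +
      if i = k then Pi.single n (weight lam n k * (‖coeff s x n k + a‖ - ‖coeff s x n k‖))
      else 0 := by
  ext m
  by_cases hmi : m = n ∧ i = k
  · obtain ⟨rfl, rfl⟩ := hmi
    cases s <;>
      simp only [term, hn, ↓reduceIte, single, coeff, cond_true, cond_false, Prod.fst_add,
        Prod.snd_add, Pi.add_apply, Pi.single_eq_same, Pi.zero_apply, add_zero] <;>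
      ring
  · cases s <;> by_cases h : m = n <;> simp_all [term, single, ite_apply]

theorem hasSum_term_add_single (hn : 2 ≤ n) (a : ℂ) {i : ℕ} {r : ℝ}
    (h : HasSum (term lam x i) r) :
    HasSum (term lam (x + single s n k a) i) (r +
      if i = k then weight lam n k * (‖coeff s x n k + a‖ - ‖coeff s x n k‖) else 0) := by
  rw [term_add_single hn]
  split_ifs
  · exact h.add (hasSum_pi_single _ _)
  · simpa using h

theorem Admissible.add_single (hx : Admissible p lam x) (hfree : IsFree p n k) (a : ℂ) :
    Admissible p lam (x + single s n k a) := by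
  obtain ⟨hn, hk, hkp⟩ := hfree
  have hfst : ∀ m j, ¬(m = n ∧ j = k) → (x + single s n k a).1 m j = x.1 m j := fun m j h =>
    coeff_add_single_of_ne (s' := true) a (by simp only [ne_eq, Prod.mk.injEq]; tauto)
  have hsnd : ∀ m j, ¬(m = n ∧ j = k) → (x + single s n k a).2 m j = x.2 m j := fun m j h =>
    coeff_add_single_of_ne (s' := false) a (by simp only [ne_eq, Prod.mk.injEq]; tauto)
  refine ⟨?_, ?_, fun j hj hjp => ?_, fun m j hmj => ?_, fun i hi =>
    (hasSum_term_add_single hn a (hx.summable i hi).hasSum).summable⟩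
  · rw [hfst 1 1 (by omega)]; exact hx.fst_one_one
  · rw [hsnd 1 1 (by omega)]; exact hx.snd_one_one
  · rw [hfst 1 j (by omega), hsnd 1 j (by omega)]; exact hx.zero_at_one j hj hjp
  · rw [hfst m j (by omega), hsnd m j (by omega)]; exact hx.zero_off_range m j hmj

theorem Admissible.weightedNorm_add_single (hx : Admissible p lam x) (hfree : IsFree p n k)
    (a : ℂ) : weightedNorm p lam (x + single s n k a) =
      weightedNorm p lam x + weight lam n k * (‖coeff s x n k + a‖ - ‖coeff s x n k‖) := by
  have hk : k ∈ Finset.Icc 1 p := Finset.mem_Icc.2 hfree.2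
  unfold weightedNorm
  rw [Finset.sum_congr rfl fun i hi =>
    (hasSum_term_add_single hfree.1 a (hx.summable i hi).hasSum).tsum_eq,
    Finset.sum_add_distrib, Finset.sum_ite_eq' _ _ _, if_pos hk]

theorem Admissible.add_single_mem (hx : Admissible p lam x) (hfree : IsFree p n k) {a : ℂ}
    (h : weightedNorm p lam x + weight lam n k * (‖coeff s x n k + a‖ - ‖coeff s x n k‖) ≤ 1) :
    x + single s n k a ∈ ES p lam :=
  mem_iff.2 ⟨hx.add_single hfree a, (hx.weightedNorm_add_single hfree a).trans_le h⟩

theorem weightedNorm_eq_zero (h : ∀ s n k, IsFree p n k → coeff s x n k = 0) :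
    weightedNorm p lam x = 0 := by
  refine Finset.sum_eq_zero fun i hi => ?_
  have hterm : term lam x i = 0 := by
    ext m
    by_cases hm : 2 ≤ m
    · have h₁ : x.1 m i = 0 := h true m i ⟨hm, Finset.mem_Icc.1 hi⟩
      have h₂ : x.2 m i = 0 := h false m i ⟨hm, Finset.mem_Icc.1 hi⟩
      simp [term, h₁, h₂]
    · simp [term, hm]
  rw [hterm, Pi.zero_def, tsum_zero]

theorem Admissible.weightedNorm_eq_of_forall_ne (hx : Admissible p lam x) (hfree : IsFree p n k)
    (h : ∀ s' m j, IsFree p m j → (s', m, j) ≠ (s, n, k) → coeff s' x m j = 0) :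
    weightedNorm p lam x = weight lam n k * ‖coeff s x n k‖ := by
  have hzero : weightedNorm p lam (x + single s n k (-coeff s x n k)) = 0 :=
    weightedNorm_eq_zero fun s' m j hj => by
      by_cases hne : (s', m, j) = (s, n, k)
      · obtain ⟨rfl, rfl, rfl⟩ : s' = s ∧ m = n ∧ j = k := by simpa using hne
        rw [coeff_add, Pi.add_apply, Pi.add_apply, coeff_single_self, add_neg_cancel]
      · rw [coeff_add_single_of_ne _ hne, h s' m j hj hne]
  rw [hx.weightedNorm_add_single hfree, add_neg_cancel, norm_zero] at hzero
  linarith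

theorem weightedNorm_eq_one (hp : 1 ≤ p) (hlam : 0 ≤ lam)
    (hx : x ∈ (ES p lam).extremePoints ℝ) : weightedNorm p lam x = 1 := by
  obtain ⟨hadm, hle⟩ := mem_iff.1 hx.1
  by_contra hne
  have hfree : IsFree p 2 1 := ⟨le_rfl, le_rfl, hp⟩
  have hw := hfree.weight_pos hlam
  set ε := (1 - weightedNorm p lam x) / weight lam 2 1
  have hε : 0 < ε := div_pos (sub_pos.2 (lt_of_le_of_ne hle hne)) hw
  have hwε : weight lam 2 1 * ε = 1 - weightedNorm p lam x := mul_div_cancel₀ _ hw.ne'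
  have hmem : ∀ a : ℂ, ‖a‖ = ε → x + single true 2 1 a ∈ ES p lam := fun a ha =>
    hadm.add_single_mem hfree (by
      have := norm_add_le (coeff true x 2 1) a
      nlinarith)
  have hsub : x - single true 2 1 ε ∈ ES p lam := by
    rw [sub_eq_add_neg, ← single_neg]
    exact hmem _ (by simp [hε.le])
  have := eq_zero_of_add_mem_of_sub_mem hx (hmem ε (by simp [hε.le])) hsub
  exact hε.ne' (by exact_mod_cast single_eq_zero_iff.1 this)

theorem add_single_add_single_mem (hx : x ∈ ES p lam) (hi : IsFree p n k) (hj : IsFree p m j)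
    (hne : (s', m, j) ≠ (s, n, k)) {t u : ℝ} (ht : -1 ≤ t) (hu : -1 ≤ u)
    (hbal : t * (weight lam n k * ‖coeff s x n k‖) + u * (weight lam m j * ‖coeff s' x m j‖) = 0) :
    x + (single s n k (t * coeff s x n k) + single s' m j (u * coeff s' x m j)) ∈ ES p lam := by
  obtain ⟨hadm, hle⟩ := mem_iff.1 hx
  rw [← add_assoc]
  refine (hadm.add_single hi _).add_single_mem hj ?_
  rw [hadm.weightedNorm_add_single hi, coeff_add_single_of_ne _ hne,
    norm_add_ofReal_mul_self_sub_norm _ ht, norm_add_ofReal_mul_self_sub_norm _ hu]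
  linarith

theorem isFree_coeff_eq_zero_of_ne (hlam : 0 ≤ lam) (hx : x ∈ (ES p lam).extremePoints ℝ)
    (hi : IsFree p n k) (hj : IsFree p m j) (hne : (s', m, j) ≠ (s, n, k))
    (hc : coeff s x n k ≠ 0) : coeff s' x m j = 0 := by
  by_contra hd
  set c := coeff s x n k
  set d := coeff s' x m j
  have hA : 0 < weight lam n k * ‖c‖ := mul_pos (hi.weight_pos hlam) (norm_pos_iff.2 hc)
  have hB : 0 < weight lam m j * ‖d‖ := mul_pos (hj.weight_pos hlam) (norm_pos_iff.2 hd)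
  set t := weight lam m j * ‖d‖ / (weight lam n k * ‖c‖ + weight lam m j * ‖d‖)
  set u := weight lam n k * ‖c‖ / (weight lam n k * ‖c‖ + weight lam m j * ‖d‖)
  have ht : 0 < t ∧ t ≤ 1 := ⟨by positivity, (div_le_one (by positivity)).2 (by linarith)⟩
  have hu : 0 < u ∧ u ≤ 1 := ⟨by positivity, (div_le_one (by positivity)).2 (by linarith)⟩
  have hbal : t * (weight lam n k * ‖c‖) = u * (weight lam m j * ‖d‖) := by
    simp only [t, u]; field_simp
  set v := single s n k (t * c) + single s' m j (↑(-u) * d)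
  have hadd : x + v ∈ ES p lam :=
    add_single_add_single_mem hx.1 hi hj hne (by linarith) (by linarith) (by linarith)
  have hsub : x - v ∈ ES p lam := by
    have := add_single_add_single_mem hx.1 hi hj hne (t := -t) (u := u) (by linarith)
      (by linarith) (by linarith)
    simpa only [v, sub_eq_add_neg, neg_add, ← single_neg, ofReal_neg, neg_mul, neg_neg] using this
  have hv := congrArg (coeff s · n k) (eq_zero_of_add_mem_of_sub_mem hx hadd hsub)
  simp only [v, coeff_add, Pi.add_apply, coeff_single_self, coeff_single_of_ne _ hne.symm,
    add_zero, coeff_zero, Pi.zero_apply] at hv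
  exact hc ((mul_eq_zero.1 hv).resolve_left (ofReal_ne_zero.2 ht.1.ne'))

theorem coeff_eq_zero_of_ne (hlam : 0 ≤ lam) (hx : x ∈ (ES p lam).extremePoints ℝ)
    (hi : IsFree p n k) (hc : coeff s x n k ≠ 0) (hne : (s', m, j) ≠ (s, n, k))
    (h11 : (s', m, j) ≠ (true, 1, 1)) : coeff s' x m j = 0 := by
  by_cases hj : IsFree p m j
  · exact isFree_coeff_eq_zero_of_ne hlam hx hi hj hne hc
  · exact (mem_iff.1 hx.1).1.coeff_eq_zero hj h11

end ES

/-- Every extreme point of the coefficient set of `HS_p^0(λ)` has exactly one nonzero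
coefficient besides `a_{1,1} = 1`: a single `a_{n,k}` (`n ≥ 2`) of modulus
`1/(2(k−1) + n(λn+1−λ))`, or a single `b_{m,k}` (`m ≥ 2`) of modulus
`1/(2(k−1) + m(λm+1−λ))`. -/
theorem extreme_points_form
    (p : ℕ) (hp : 1 ≤ p) (lam : ℝ) (hlam : lam ∈ Set.Icc (0 : ℝ) 1)
    (x : (ℕ → ℕ → ℂ) × (ℕ → ℕ → ℂ)) (hx : x ∈ Set.extremePoints ℝ (ES p lam)) :
    (∃ n k : ℕ, 2 ≤ n ∧ 1 ≤ k ∧ k ≤ p ∧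
      ‖x.1 n k‖ = 1 / (2 * ((k : ℝ) - 1) + n * (lam * n + 1 - lam)) ∧
      (∀ m j : ℕ, ¬(m = 1 ∧ j = 1) → ¬(m = n ∧ j = k) → x.1 m j = 0) ∧
      (∀ m j : ℕ, x.2 m j = 0)) ∨
    (∃ m k : ℕ, 2 ≤ m ∧ 1 ≤ k ∧ k ≤ p ∧
      ‖x.2 m k‖ = 1 / (2 * ((k : ℝ) - 1) + m * (lam * m + 1 - lam)) ∧
      (∀ n j : ℕ, ¬(n = 1 ∧ j = 1) → x.1 n j = 0) ∧
      (∀ n j : ℕ, ¬(n = m ∧ j = k) → x.2 n j = 0)) := by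
  have hadm := (ES.mem_iff.1 hx.1).1
  have hone := ES.weightedNorm_eq_one hp hlam.1 hx
  obtain ⟨s, n, k, hfree, hc⟩ : ∃ s n k, ES.IsFree p n k ∧ ES.coeff s x n k ≠ 0 := by
    by_contra! h
    exact one_ne_zero (hone.symm.trans (ES.weightedNorm_eq_zero h))
  have hzero := fun s' m j =>
    ES.coeff_eq_zero_of_ne (s' := s') (m := m) (j := j) hlam.1 hx hfree hc
  have hnorm : ‖ES.coeff s x n k‖ = 1 / ES.weight lam n k := by
    rw [eq_div_iff (hfree.weight_pos hlam.1).ne', mul_comm, ← hone,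
      hadm.weightedNorm_eq_of_forall_ne hfree fun s' m j hj hne =>
        hzero s' m j hne (by rintro ⟨⟩; exact absurd hj.1 (by norm_num))]
  obtain ⟨hn, hk, hkp⟩ := hfree
  cases s
  · exact .inr ⟨n, k, hn, hk, hkp, hnorm, fun m j h => hzero true m j (by simp) (by simpa using h),
      fun m j h => hzero false m j (by simpa using h) (by simp)⟩
  · exact .inl ⟨n, k, hn, hk, hkp, hnorm, fun m j h11 h => hzero true m j (by simpa using h)
      (by simpa using h11), fun m j => hzero false m j (by simp) (by simp)⟩
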